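/- arXiv:math/9804050 — 2 statements merged into one kernel-verified Lean document; each statement's English description precedes it below -/
import Mathlib

section
/- Let p be a prime and s a real number. Writing I(s) = ∫⁻_{ℤ_p} ‖z‖^s dμ ∈ [0, ∞] for the lower Lebesgue integral of z ↦ ‖z‖^s against the normalized Haar measure μ on ℤ_p, one has the functional equation I(s) = p^{-(s+1)} · I(s) + (1 - 1/p), as an identity in the extended nonnegative reals. (This is equation (2.15) of the paper, obtained by splitting ℤ_p into pℤ_p and the units and using the scaling behaviour of μ under multiplication by p.) -/
/-!
Split `ℤ_p ∖ {0}` into the spheres `‖z‖ = p^{-k}`. The ball `‖z‖ ≤ p^{-k}` is the kernel of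
`ℤ_p → ℤ/p^k`, a subgroup of index `p^k`, so invariance gives it measure `p^{-k}`; hence the
sphere has measure `p^{-k}(1 - p⁻¹)`, `{0}` is null, and the integral is the geometric series
`∑ₖ p^{-k(s+1)} (1 - p⁻¹)`, whose first term splits off as the functional equation.
-/

open MeasureTheory
open scoped ENNReal

variable (p : ℕ) [Fact p.Prime]

noncomputable instance : MeasurableSpace ℤ_[p] := borel _
instance : BorelSpace ℤ_[p] := ⟨rfl⟩

open Metric

lemma ENNReal.tsum_pow_mul_eq_mul_tsum_pow_mul_add (r a : ℝ≥0∞) :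
    ∑' k : ℕ, r ^ k * a = r * ∑' k : ℕ, r ^ k * a + a := by
  conv_lhs => rw [tsum_eq_zero_add' ENNReal.summable]
  simp only [pow_zero, one_mul, pow_succ', mul_assoc, ENNReal.tsum_mul_left, add_comm]

namespace PadicInt

variable {p}

lemma coe_ker_toZModPow_eq_closedBall (k : ℕ) :
    ((toZModPow k : ℤ_[p] →+* ZMod (p ^ k)).toAddMonoidHom.ker : Set ℤ_[p]) =
      closedBall 0 ((p : ℝ) ^ (-k : ℤ)) := by
  ext x
  rw [SetLike.mem_coe, AddMonoidHom.mem_ker, mem_closedBall_zero_iff,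
    norm_le_pow_iff_mem_span_pow, ← ker_toZModPow, RingHom.mem_ker]
  rfl

lemma index_ker_toZModPow (k : ℕ) :
    (toZModPow k : ℤ_[p] →+* ZMod (p ^ k)).toAddMonoidHom.ker.index = p ^ k := by
  rw [AddSubgroup.index_ker, AddMonoidHom.range_eq_top.2 (ZMod.ringHom_surjective _),
    AddSubgroup.card_top, Nat.card_zmod]

lemma sphere_zpow_eq_closedBall_sdiff (k : ℕ) :
    sphere (0 : ℤ_[p]) ((p : ℝ) ^ (-k : ℤ)) =
      closedBall 0 ((p : ℝ) ^ (-k : ℤ)) \ closedBall 0 ((p : ℝ) ^ (-(k + 1 : ℕ) : ℤ)) := by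
  ext z
  have hexp : (-(k + 1 : ℕ) : ℤ) + 1 = -k := by push_cast; ring
  rw [Set.mem_sdiff, mem_sphere_zero_iff_norm, mem_closedBall_zero_iff, mem_closedBall_zero_iff,
    norm_le_pow_iff_norm_lt_pow_add_one z (-(k + 1 : ℕ)), hexp, not_lt, le_antisymm_iff]

lemma iUnion_sphere_zpow : ⋃ k : ℕ, sphere (0 : ℤ_[p]) ((p : ℝ) ^ (-k : ℤ)) = {0}ᶜ := by
  ext z
  simp only [Set.mem_iUnion, mem_sphere_zero_iff_norm, Set.mem_compl_singleton_iff]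
  refine ⟨fun ⟨k, hk⟩ hz => ?_, fun hz => ⟨z.valuation, norm_eq_zpow_neg_valuation hz⟩⟩
  have hp : (0 : ℝ) < p := by exact_mod_cast (Fact.out : p.Prime).pos
  exact (zpow_pos hp (-k : ℤ)).ne' (by rw [← hk, hz, norm_zero])

lemma pairwise_disjoint_sphere_zpow :
    Pairwise (Function.onFun Disjoint fun k : ℕ => sphere (0 : ℤ_[p]) ((p : ℝ) ^ (-k : ℤ))) := by
  intro a b hab
  refine Set.disjoint_left.2 fun z ha hb => hab ?_
  have hp : (1 : ℝ) < p := by exact_mod_cast (Fact.out : p.Prime).one_lt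
  have hexp := zpow_right_injective₀ (by positivity) hp.ne'
    ((mem_sphere_zero_iff_norm.1 ha).symm.trans (mem_sphere_zero_iff_norm.1 hb))
  omega

variable {μ : Measure ℤ_[p]} [μ.IsAddLeftInvariant]

lemma measure_closedBall_zpow (k : ℕ) :
    μ (closedBall 0 ((p : ℝ) ^ (-k : ℤ))) = μ Set.univ / (p : ℝ≥0∞) ^ k := by
  have hp := (Fact.out : p.Prime)
  have hindex := AddSubgroup.index_mul_measure _
    (by rw [coe_ker_toZModPow_eq_closedBall k]; exact measurableSet_closedBall) μ
  rw [index_ker_toZModPow, coe_ker_toZModPow_eq_closedBall] at hindex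
  rw [ENNReal.eq_div_iff (pow_ne_zero _ (by exact_mod_cast hp.ne_zero))
    (ENNReal.pow_ne_top (ENNReal.natCast_ne_top p)), ← hindex, Nat.cast_pow]

variable [IsFiniteMeasure μ]

lemma measure_sphere_zpow (k : ℕ) :
    μ (sphere 0 ((p : ℝ) ^ (-k : ℤ))) =
      ((p : ℝ≥0∞)⁻¹) ^ k * ((1 - (p : ℝ≥0∞)⁻¹) * μ Set.univ) := by
  have hp0 : (p : ℝ≥0∞) ≠ 0 := by exact_mod_cast (Fact.out : p.Prime).ne_zero
  have hball : closedBall (0 : ℤ_[p]) ((p : ℝ) ^ (-(k + 1 : ℕ) : ℤ)) ⊆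
      closedBall 0 ((p : ℝ) ^ (-k : ℤ)) :=
    closedBall_subset_closedBall
      (zpow_le_zpow_right₀ (by exact_mod_cast (Fact.out : p.Prime).one_le) (by omega))
  rw [sphere_zpow_eq_closedBall_sdiff, measure_sdiff hball measurableSet_closedBall.nullMeasurableSet
    (measure_ne_top _ _), measure_closedBall_zpow, measure_closedBall_zpow, ENNReal.div_eq_inv_mul,
    ENNReal.div_eq_inv_mul, ENNReal.inv_pow, ENNReal.inv_pow, pow_succ, mul_assoc,
    ← ENNReal.mul_sub, ENNReal.sub_mul, one_mul]
  · exact fun _ _ => measure_ne_top μ _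
  · exact fun _ _ => ENNReal.pow_ne_top (ENNReal.inv_ne_top.2 hp0)

lemma measure_singleton_zero : μ {0} = 0 := by
  have hp : (p : ℝ≥0∞)⁻¹ < 1 :=
    ENNReal.inv_lt_one.2 (by exact_mod_cast (Fact.out : p.Prime).one_lt)
  have hlim := ENNReal.Tendsto.mul_const (ENNReal.tendsto_pow_atTop_nhds_zero_of_lt_one hp)
    (.inr (measure_ne_top μ Set.univ))
  refine le_zero_iff.1 (ge_of_tendsto' (by simpa using hlim) fun k => ?_)
  rw [← ENNReal.inv_pow, ← ENNReal.div_eq_inv_mul, ← measure_closedBall_zpow]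
  exact measure_mono (Set.singleton_subset_iff.2 (mem_closedBall_self (by positivity)))

lemma lintegral_comp_norm_eq_tsum (f : ℝ → ℝ≥0∞) :
    ∫⁻ z, f ‖z‖ ∂μ = ∑' k : ℕ, f ((p : ℝ) ^ (-k : ℤ)) * μ (sphere 0 ((p : ℝ) ^ (-k : ℤ))) := by
  have hae : ({0}ᶜ : Set ℤ_[p]) =ᵐ[μ] Set.univ := by
    rw [ae_eq_univ, compl_compl, measure_singleton_zero]
  calc ∫⁻ z, f ‖z‖ ∂μ = ∫⁻ z in ⋃ k : ℕ, sphere 0 ((p : ℝ) ^ (-k : ℤ)), f ‖z‖ ∂μ := by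
        rw [iUnion_sphere_zpow, setLIntegral_congr hae, setLIntegral_univ]
    _ = ∑' k : ℕ, ∫⁻ z in sphere 0 ((p : ℝ) ^ (-k : ℤ)), f ‖z‖ ∂μ :=
        lintegral_iUnion (fun _ => isClosed_sphere.measurableSet) pairwise_disjoint_sphere_zpow _
    _ = ∑' k : ℕ, f ((p : ℝ) ^ (-k : ℤ)) * μ (sphere 0 ((p : ℝ) ^ (-k : ℤ))) := by
        congr 1 with k
        rw [setLIntegral_congr_fun isClosed_sphere.measurableSet
          (fun z hz => by rw [mem_sphere_zero_iff_norm.1 hz]), setLIntegral_const]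

lemma lintegral_norm_rpow_eq_tsum (s : ℝ) :
    ∫⁻ z, ENNReal.ofReal (‖z‖ ^ s) ∂μ =
      ∑' k : ℕ, ((p : ℝ≥0∞) ^ (-(s + 1))) ^ k * ((1 - (p : ℝ≥0∞)⁻¹) * μ Set.univ) := by
  have hp : (0 : ℝ) < p := by exact_mod_cast (Fact.out : p.Prime).pos
  have hterm (k : ℕ) : ENNReal.ofReal (((p : ℝ) ^ (-k : ℤ)) ^ s) = ((p : ℝ≥0∞) ^ (-s)) ^ k := by
    rw [zpow_neg, zpow_natCast, Real.inv_rpow (by positivity), ← Real.rpow_natCast,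
      ← Real.rpow_mul hp.le, mul_comm, Real.rpow_mul hp.le, Real.rpow_natCast, ← inv_pow,
      ← Real.rpow_neg hp.le, ENNReal.ofReal_pow (by positivity), ← ENNReal.ofReal_rpow_of_pos hp,
      ENNReal.ofReal_natCast]
  have hratio : (p : ℝ≥0∞) ^ (-s) * (p : ℝ≥0∞)⁻¹ = (p : ℝ≥0∞) ^ (-(s + 1)) := by
    rw [neg_add, ENNReal.rpow_add _ _ (by exact_mod_cast hp.ne') (ENNReal.natCast_ne_top p),
      ENNReal.rpow_neg_one]
  rw [lintegral_comp_norm_eq_tsum (fun r => ENNReal.ofReal (r ^ s))]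
  congr 1 with k
  rw [hterm, measure_sphere_zpow, ← mul_assoc, ← mul_pow, hratio]

end PadicInt

/-- The functional equation `I(s) = p^{-(s+1)} · I(s) + (1 - 1/p)` for the lower Lebesgue
integral `I(s) = ∫⁻_{ℤ_p} ‖z‖^s dμ`, as an identity in `[0, ∞]`.  (Equation (2.15).) -/
theorem lintegral_norm_rpow_functional_equation (μ : Measure ℤ_[p]) [μ.IsAddHaarMeasure]
    (hμ : μ Set.univ = 1) (s : ℝ) :
    ∫⁻ z : ℤ_[p], ENNReal.ofReal (‖z‖ ^ s) ∂μ =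
      (p : ℝ≥0∞) ^ (-(s + 1)) * ∫⁻ z : ℤ_[p], ENNReal.ofReal (‖z‖ ^ s) ∂μ
        + (1 - (p : ℝ≥0∞)⁻¹) := by
  have : IsProbabilityMeasure μ := ⟨hμ⟩
  rw [PadicInt.lintegral_norm_rpow_eq_tsum, hμ, mul_one]
  exact ENNReal.tsum_pow_mul_eq_mul_tsum_pow_mul_add _ _
end

section
/- Let p be a prime and s a real number. The lower Lebesgue integral ∫⁻_{ℤ_p} ‖z‖^s dμ against the normalized Haar measure μ on ℤ_p is finite if and only if s > -1. (This is the local analytic content of Proposition 2.12: for a discrepancy e_i of an exceptional divisor with rK_X Cartier, taking s = e_i/r, the local p-adic integral ∫_R |z^{e_i} dz^{⊗r}|^{1/r} is finite exactly when e_i/r > -1, i.e. exactly in the log-terminal case.) -/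
/-!
The spheres `‖z‖ = p⁻ⁿ` (`n : ℕ`) cover `ℤ_[p] \ {0}`. The closed ball of radius `p⁻ⁿ` is the
ideal `pⁿ ℤ_[p]`, an additive subgroup of index `pⁿ`, so it has measure `p⁻ⁿ μ(ℤ_[p])`; the sphere
is this ball minus the next one. Hence the integral is the geometric series
`(1 - p⁻¹) μ(ℤ_[p]) ∑ₙ (p^{-(s+1)})ⁿ`, which converges exactly when `p^{-(s+1)} < 1`.
-/

open MeasureTheory
open scoped ENNReal

variable (p : ℕ) [Fact p.Prime]

open Metric Set

section
variable {E : Type*} [SeminormedAddGroup E] [MeasurableSpace E] [OpensMeasurableSpace E]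

theorem lintegral_comp_norm_eq_tsum_sphere {μ : Measure E} {r : ℕ → ℝ} (hr : Function.Injective r)
    (h : ∀ᵐ z ∂μ, ∃ n, ‖z‖ = r n) (g : ℝ → ℝ≥0∞) :
    ∫⁻ z, g ‖z‖ ∂μ = ∑' n, g (r n) * μ (sphere 0 (r n)) := by
  have hcover : (⋃ n, sphere (0 : E) (r n)) =ᵐ[μ] (univ : Set E) := by
    rw [ae_eq_univ]
    exact measure_eq_zero_iff_ae_notMem.2 <| h.mono fun z ⟨n, hn⟩ hz =>
      hz (mem_iUnion.2 ⟨n, mem_sphere_zero_iff_norm.2 hn⟩)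
  have hdisj : Pairwise (Function.onFun Disjoint fun n => sphere (0 : E) (r n)) :=
    fun m n hmn => disjoint_left.2 fun z hm hn =>
      hmn (hr ((mem_sphere_zero_iff_norm.1 hm).symm.trans (mem_sphere_zero_iff_norm.1 hn)))
  rw [← setLIntegral_univ, ← setLIntegral_congr hcover,
    lintegral_iUnion (fun n => isClosed_sphere.measurableSet) hdisj]
  refine tsum_congr fun n => ?_
  rw [setLIntegral_congr_fun isClosed_sphere.measurableSet
    fun z hz => by rw [mem_sphere_zero_iff_norm.1 hz], setLIntegral_const]
end

namespace PadicInt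
section
variable {p}

theorem measure_closedBall_zero_pow (μ : Measure ℤ_[p]) [μ.IsAddLeftInvariant] (n : ℕ) :
    μ (closedBall 0 ((p : ℝ) ^ (-n : ℤ))) = (p : ℝ≥0∞)⁻¹ ^ n * μ univ := by
  set f := (toZModPow (p := p) n).toAddMonoidHom
  have hker : (f.ker : Set ℤ_[p]) = closedBall 0 ((p : ℝ) ^ (-n : ℤ)) := by
    ext z
    rw [SetLike.mem_coe, mem_closedBall_zero_iff, norm_le_pow_iff_mem_span_pow, ← ker_toZModPow]
    rfl
  have hindex : f.ker.index = p ^ n := by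
    rw [AddSubgroup.index_ker, AddMonoidHom.range_eq_top_of_surjective _ (ZMod.ringHom_surjective _)]
    simp
  have hpn : (p : ℝ≥0∞) ^ n ≠ 0 := by simp [NeZero.ne p]
  rw [← hker, ← AddSubgroup.index_mul_measure f.ker (hker ▸ isClosed_closedBall.measurableSet),
    hindex, Nat.cast_pow, ← mul_assoc, ← ENNReal.inv_pow,
    ENNReal.inv_mul_cancel hpn (ENNReal.pow_ne_top (ENNReal.natCast_ne_top p)), one_mul]

theorem ball_zero_pow_eq_closedBall (n : ℕ) :
    ball (0 : ℤ_[p]) ((p : ℝ) ^ (-n : ℤ)) = closedBall 0 ((p : ℝ) ^ (-(n + 1 : ℕ) : ℤ)) := by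
  ext z
  rw [mem_ball_zero_iff, mem_closedBall_zero_iff, norm_lt_pow_iff_norm_le_pow_sub_one]
  push_cast
  ring_nf

theorem measure_sphere_zero_pow (μ : Measure ℤ_[p]) [μ.IsAddLeftInvariant] [IsFiniteMeasure μ]
    (n : ℕ) :
    μ (sphere 0 ((p : ℝ) ^ (-n : ℤ))) = (p : ℝ≥0∞)⁻¹ ^ n * (1 - (p : ℝ≥0∞)⁻¹) * μ univ := by
  rw [← closedBall_sdiff_ball,
    measure_sdiff ball_subset_closedBall measurableSet_ball.nullMeasurableSet (measure_ne_top μ _), ball_zero_pow_eq_closedBall, measure_closedBall_zero_pow,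
    measure_closedBall_zero_pow, ← ENNReal.sub_mul fun _ _ => measure_ne_top μ univ,
    ENNReal.mul_sub fun _ _ => ENNReal.pow_ne_top (by simp [NeZero.ne p]),
    pow_succ, mul_one]

theorem measure_singleton_zero_s5 (μ : Measure ℤ_[p]) [μ.IsAddLeftInvariant] [IsFiniteMeasure μ] :
    μ {0} = 0 := by
  have hle (n : ℕ) : μ {0} ≤ (p : ℝ≥0∞)⁻¹ ^ n * μ univ := by
    rw [← measure_closedBall_zero_pow]
    exact measure_mono (singleton_subset_iff.2 (mem_closedBall_self (by positivity)))
  have hlim : Filter.Tendsto (fun n => (p : ℝ≥0∞)⁻¹ ^ n * μ univ) Filter.atTop (nhds 0) := by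
    simpa using ENNReal.Tendsto.mul_const
      (ENNReal.tendsto_pow_atTop_nhds_zero_of_lt_one
        (ENNReal.inv_lt_one.2 (mod_cast (Fact.out : p.Prime).one_lt)))
      (Or.inr (measure_ne_top μ univ))
  exact le_antisymm (ge_of_tendsto' hlim hle) bot_le

theorem ae_exists_norm_eq_pow (μ : Measure ℤ_[p]) [μ.IsAddLeftInvariant] [IsFiniteMeasure μ] :
    ∀ᵐ z ∂μ, ∃ n : ℕ, ‖z‖ = (p : ℝ) ^ (-n : ℤ) := by
  filter_upwards [measure_eq_zero_iff_ae_notMem.1 (measure_singleton_zero_s5 μ)] with z hz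
  exact ⟨z.valuation, norm_eq_zpow_neg_valuation hz⟩

theorem lintegral_ofReal_norm_rpow (μ : Measure ℤ_[p]) [μ.IsAddLeftInvariant] [IsFiniteMeasure μ]
    (s : ℝ) :
    ∫⁻ z, ENNReal.ofReal (‖z‖ ^ s) ∂μ =
      (∑' n : ℕ, ENNReal.ofReal ((p : ℝ) ^ (-(s + 1))) ^ n) * ((1 - (p : ℝ≥0∞)⁻¹) * μ univ) := by
  have hp : (1 : ℝ) < p := mod_cast (Fact.out : p.Prime).one_lt
  have hp₀ : (0 : ℝ) < p := zero_lt_one.trans hp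
  have hinj : Function.Injective fun n : ℕ => (p : ℝ) ^ (-n : ℤ) :=
    (zpow_right_injective₀ hp₀ hp.ne').comp (neg_injective.comp Nat.cast_injective)
  have hterm (n : ℕ) : ENNReal.ofReal (((p : ℝ) ^ (-n : ℤ)) ^ s) * (p : ℝ≥0∞)⁻¹ ^ n =
      ENNReal.ofReal ((p : ℝ) ^ (-(s + 1))) ^ n := by
    rw [← ENNReal.ofReal_natCast, ← ENNReal.ofReal_inv_of_pos hp₀,
      ← ENNReal.ofReal_pow (by positivity), ← ENNReal.ofReal_mul (by positivity),
      ← ENNReal.ofReal_pow (by positivity), ← Real.rpow_intCast, ← Real.rpow_mul hp₀.le, inv_pow,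
      ← Real.rpow_natCast (p : ℝ), ← Real.rpow_neg hp₀.le, ← Real.rpow_natCast,
      ← Real.rpow_mul hp₀.le, ← Real.rpow_add hp₀]
    push_cast
    ring_nf
  rw [lintegral_comp_norm_eq_tsum_sphere hinj (ae_exists_norm_eq_pow μ)
    (fun t => ENNReal.ofReal (t ^ s)), ← ENNReal.tsum_mul_right]
  refine tsum_congr fun n => ?_
  rw [measure_sphere_zero_pow, ← hterm]
  ring

end
end PadicInt

theorem lintegral_norm_rpow_lt_top_iff (μ : Measure ℤ_[p]) [μ.IsAddHaarMeasure]
    (s : ℝ) :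
    (∫⁻ z : ℤ_[p], ENNReal.ofReal (‖z‖ ^ s) ∂μ) < ⊤ ↔ -1 < s := by
  have hp : (1 : ℝ) < p := mod_cast (Fact.out : p.Prime).one_lt
  have hc₀ : (1 - (p : ℝ≥0∞)⁻¹) * μ univ ≠ 0 :=
    mul_ne_zero (tsub_pos_of_lt (ENNReal.inv_lt_one.2 (mod_cast hp))).ne' (NeZero.ne _)
  have hc : (1 - (p : ℝ≥0∞)⁻¹) * μ univ ≠ ⊤ :=
    ENNReal.mul_ne_top (ENNReal.sub_ne_top ENNReal.one_ne_top) (measure_ne_top μ univ)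
  rw [PadicInt.lintegral_ofReal_norm_rpow, lt_top_iff_ne_top, Ne, ENNReal.mul_eq_top]
  simp only [hc, hc₀, ne_eq, not_false_eq_true, and_true, and_false, false_or]
  rw [← ne_eq, ← lt_top_iff_ne_top, tsum_geometric_lt_top, ENNReal.ofReal_lt_one,
    Real.rpow_lt_one_iff_of_pos (by positivity)]
  simp [hp, hp.not_gt, neg_lt_iff_pos_add']
end
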